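/- arXiv:1910.08151 — 4 statements merged into one kernel-verified Lean document; each statement's English description precedes it below -/
import Mathlib

section
/- For every integer t ≥ 1 and every integer i with 1 ≤ i ≤ t, one has α_t^i ≤ 2H/t. -/
/-- The learning rate `α_t = (H+1)/(H+t)`. -/
noncomputable def lrate (H t : ℕ) : ℝ := (H + 1) / (H + t)

/-- The weight `α_t^i = α_i · ∏_{j=i+1}^t (1 − α_j)`. -/
noncomputable def lrateW (H t i : ℕ) : ℝ :=
  lrate H i * ∏ j ∈ Finset.Icc (i + 1) t, (1 - lrate H j)

/-!
Each further step multiplies `α_t^i` by `1 - α_{t+1}`, and `α_t (1 - α_{t+1}) ≤ α_{t+1}`, so by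
induction on `t` the weight `α_t^i` never exceeds the current rate `α_t = (H+1)/(H+t)`, which is at
most `2H/t` once `H ≥ 1`.
-/

lemma one_sub_lrate_succ (H t : ℕ) : 1 - lrate H (t + 1) = t / (H + t + 1) := by
  unfold lrate
  push_cast
  field_simp
  ring

lemma lrate_mul_one_sub_lrate_succ_le (H t : ℕ) :
    lrate H t * (1 - lrate H (t + 1)) ≤ lrate H (t + 1) := by
  have h : (t : ℝ) / (H + t) ≤ 1 := div_le_one_of_le₀ (by simp) (by positivity)
  calc lrate H t * (1 - lrate H (t + 1))
      = (H + 1) / (H + t + 1) * (t / (H + t)) := by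
        rw [one_sub_lrate_succ, lrate]; ring
    _ ≤ (H + 1) / (H + t + 1) := mul_le_of_le_one_right (by positivity) h
    _ = lrate H (t + 1) := by rw [lrate]; push_cast; ring

lemma lrateW_self (H i : ℕ) : lrateW H i i = lrate H i := by
  simp [lrateW]

lemma lrateW_succ (H i t : ℕ) (hit : i ≤ t) :
    lrateW H (t + 1) i = lrateW H t i * (1 - lrate H (t + 1)) := by
  rw [lrateW, lrateW, Finset.prod_Icc_succ_top (by omega), mul_assoc]

lemma lrateW_le_lrate (H i t : ℕ) (hit : i ≤ t) : lrateW H t i ≤ lrate H t := by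
  induction t, hit using Nat.le_induction with
  | base => rw [lrateW_self]
  | succ t hit ih =>
    have h : 0 ≤ 1 - lrate H (t + 1) := by rw [one_sub_lrate_succ]; positivity
    calc lrateW H (t + 1) i = lrateW H t i * (1 - lrate H (t + 1)) := lrateW_succ H i t hit
      _ ≤ lrate H t * (1 - lrate H (t + 1)) := mul_le_mul_of_nonneg_right ih h
      _ ≤ lrate H (t + 1) := lrate_mul_one_sub_lrate_succ_le H t

lemma lrate_le_two_mul_div (H t : ℕ) (hH : 1 ≤ H) (ht : 1 ≤ t) : lrate H t ≤ 2 * H / t := by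
  have hH' : (1 : ℝ) ≤ H := by exact_mod_cast hH
  have ht' : (1 : ℝ) ≤ t := by exact_mod_cast ht
  rw [lrate, div_le_div_iff₀ (by positivity) (by positivity)]
  nlinarith

theorem stmt_1_general (H : ℕ) (hH : 1 ≤ H) (t : ℕ) (ht : 1 ≤ t)
    (i : ℕ) (hit : i ≤ t) :
    lrateW H t i ≤ 2 * H / t :=
  (lrateW_le_lrate H i t hit).trans (lrate_le_two_mul_div H t hH ht)

theorem stmt_1 (H : ℕ) (hH : 1 ≤ H) (t : ℕ) (ht : 1 ≤ t)
    (i : ℕ) (hi : 1 ≤ i) (hit : i ≤ t) :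
    lrateW H t i ≤ 2 * H / t :=
  stmt_1_general H hH t ht i hit
end

section
/- Suppose each r_h is L_2-Lipschitz with respect to D, i.e. |r_h(x,a) − r_h(x',a')| ≤ L_2·D((x,a),(x',a')) for all (x,a),(x',a'), and the transition kernels are L_1-Lipschitz in total variation, in the sense that for every measurable g : S → ℝ with |g| ≤ 1 pointwise and all (x,a),(x',a') ∈ S × A, |∫ g dP_h(·|x,a) − ∫ g dP_h(·|x',a')| ≤ 2·L_1·D((x,a),(x',a')). Then for every h ∈ {1,…,H}, the function Q_h is (2·L_1·H + L_2)-Lipschitz with respect to D: |Q_h(x,a) − Q_h(x',a')| ≤ (2·L_1·H + L_2)·D((x,a),(x',a')). -/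
open MeasureTheory

theorem stmt_10
    {S : Type*} [MeasurableSpace S] {A : Type*} [Nonempty A]
    (D : S × A → S × A → ℝ)
    (hD_self : ∀ p, D p p = 0)
    (hD_pos : ∀ p q, p ≠ q → 0 < D p q)
    (hD_symm : ∀ p q, D p q = D q p)
    (hD_triangle : ∀ p q z, D p z ≤ D p q + D q z)
    (H : ℕ) (hH : 1 ≤ H)
    (r : ℕ → S × A → ℝ)
    (hr_bdd : ∀ h ∈ Finset.Icc 1 H, ∀ p, r h p ∈ Set.Icc (0 : ℝ) 1)
    (P : ℕ → S × A → Measure S)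
    (hP : ∀ h ∈ Finset.Icc 1 H, ∀ p, IsProbabilityMeasure (P h p))
    (Q : ℕ → S × A → ℝ) (V : ℕ → S → ℝ)
    (hV_top : ∀ x, V (H + 1) x = 0)
    (hV_meas : ∀ h ∈ Finset.Icc 1 H, Measurable (V (h + 1)))
    (hV_bdd : ∀ h ∈ Finset.Icc 1 H, ∀ x, 0 ≤ V (h + 1) x ∧ V (h + 1) x ≤ H)
    (hQ : ∀ h ∈ Finset.Icc 1 H, ∀ p, Q h p = r h p + ∫ x', V (h + 1) x' ∂(P h p))
    (hV : ∀ h ∈ Finset.Icc 1 H, ∀ x, V h x = ⨆ a : A, Q h (x, a))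
    (L₁ L₂ : ℝ)
    (hr_lip : ∀ h ∈ Finset.Icc 1 H, ∀ p q, |r h p - r h q| ≤ L₂ * D p q)
    (hP_lip : ∀ h ∈ Finset.Icc 1 H, ∀ g : S → ℝ, Measurable g → (∀ x, |g x| ≤ 1) →
      ∀ p q, |(∫ x, g x ∂(P h p)) - ∫ x, g x ∂(P h q)| ≤ 2 * L₁ * D p q) :
    ∀ h ∈ Finset.Icc 1 H, ∀ p q,
      |Q h p - Q h q| ≤ (2 * L₁ * H + L₂) * D p q := by
  intro h hh p q
  have hHpos : (0:ℝ) < H := by exact_mod_cast hH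
  set g : S → ℝ := fun x => V (h + 1) x / H with hg
  have hgmeas : Measurable g := (hV_meas h hh).div_const _
  have hgbd : ∀ x, |g x| ≤ 1 := by
    intro x
    obtain ⟨h0, h1⟩ := hV_bdd h hh x
    rw [abs_div, abs_of_nonneg h0, abs_of_pos hHpos]
    exact (div_le_one hHpos).2 h1
  have hint := hP_lip h hh g hgmeas hgbd p q
  have hgint : ∀ m : S × A, (∫ x, V (h+1) x ∂(P h m)) = H * ∫ x, g x ∂(P h m) := by
    intro m
    rw [hg]
    simp only [integral_div]
    field_simp
  have key : |(∫ x, V (h+1) x ∂(P h p)) - ∫ x, V (h+1) x ∂(P h q)| ≤ 2 * L₁ * H * D p q := by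
    rw [hgint p, hgint q, ← mul_sub, abs_mul, abs_of_pos hHpos]
    calc (H:ℝ) * |(∫ x, g x ∂(P h p)) - ∫ x, g x ∂(P h q)| ≤ H * (2 * L₁ * D p q) := by
          exact mul_le_mul_of_nonneg_left hint hHpos.le
      _ = 2 * L₁ * H * D p q := by ring
  rw [hQ h hh p, hQ h hh q]
  have hr := hr_lip h hh p q
  calc |r h p + (∫ x', V (h+1) x' ∂(P h p)) - (r h q + ∫ x', V (h+1) x' ∂(P h q))|
      ≤ |r h p - r h q| + |(∫ x', V (h+1) x' ∂(P h p)) - ∫ x', V (h+1) x' ∂(P h q)| := by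
        have : r h p + (∫ x', V (h+1) x' ∂(P h p)) - (r h q + ∫ x', V (h+1) x' ∂(P h q))
            = (r h p - r h q) + ((∫ x', V (h+1) x' ∂(P h p)) - ∫ x', V (h+1) x' ∂(P h q)) := by ring
        rw [this]; exact abs_add_le _ _
    _ ≤ L₂ * D p q + 2 * L₁ * H * D p q := add_le_add hr key
    _ = (2 * L₁ * H + L₂) * D p q := by ring
end

section
/- Suppose each r_h is L_1-Lipschitz with respect to D, and the transition kernels are L_2-Lipschitz in the Wasserstein (Kantorovich–Rubinstein dual) sense: for every bounded function f : S → ℝ that is 1-Lipschitz with respect to d_S, and all (x,a),(x',a') ∈ S × A, |∫ f dP_h(·|x,a) − ∫ f dP_h(·|x',a')| ≤ L_2·D((x,a),(x',a')). Then for every h ∈ {1,…,H+1}, Q_h is (∑_{i=0}^{H−h} L_1·L_2^i)-Lipschitz with respect to D and V_h is (∑_{i=0}^{H−h} L_1·L_2^i)-Lipschitz with respect to d_S (the empty sum when h = H+1 being 0). -/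
open MeasureTheory

theorem stmt_12
    {S : Type*} [MetricSpace S] [MeasurableSpace S] [BorelSpace S]
    {A : Type*} [Nonempty A]
    (D : S × A → S × A → ℝ)
    (hD_self : ∀ p, D p p = 0)
    (hD_pos : ∀ p q, p ≠ q → 0 < D p q)
    (hD_symm : ∀ p q, D p q = D q p)
    (hD_triangle : ∀ p q z, D p z ≤ D p q + D q z)
    (hD_compat : ∀ (x x' : S) (a : A), D (x, a) (x', a) ≤ dist x x')
    (H : ℕ) (hH : 1 ≤ H) (L₁ L₂ : ℝ) (hL₁ : 0 ≤ L₁) (hL₂ : 0 ≤ L₂)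
    (r : ℕ → S × A → ℝ)
    (hr_bdd : ∀ h ∈ Finset.Icc 1 H, ∀ p, r h p ∈ Set.Icc (0 : ℝ) 1)
    (P : ℕ → S × A → Measure S)
    (hP : ∀ h ∈ Finset.Icc 1 H, ∀ p, IsProbabilityMeasure (P h p))
    (Q : ℕ → S × A → ℝ) (V : ℕ → S → ℝ)
    (hV_top : ∀ x, V (H + 1) x = 0)
    (hQ_top : ∀ p, Q (H + 1) p = 0)
    (hV_meas : ∀ h ∈ Finset.Icc 1 H, Measurable (V (h + 1)))
    (hV_bdd : ∀ h ∈ Finset.Icc 1 H, ∀ x, 0 ≤ V (h + 1) x ∧ V (h + 1) x ≤ H)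
    (hQ : ∀ h ∈ Finset.Icc 1 H, ∀ p, Q h p = r h p + ∫ x', V (h + 1) x' ∂(P h p))
    (hV : ∀ h ∈ Finset.Icc 1 H, ∀ x, V h x = ⨆ a : A, Q h (x, a))
    (hr_lip : ∀ h ∈ Finset.Icc 1 H, ∀ p q, |r h p - r h q| ≤ L₁ * D p q)
    (hP_lip : ∀ h ∈ Finset.Icc 1 H, ∀ f : S → ℝ, (∃ M, ∀ x, |f x| ≤ M) →
      (∀ x y, |f x - f y| ≤ dist x y) →
      ∀ p q, |(∫ x, f x ∂(P h p)) - ∫ x, f x ∂(P h q)| ≤ L₂ * D p q) :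
    ∀ h ∈ Finset.Icc 1 (H + 1),
      (∀ p q, |Q h p - Q h q| ≤ (∑ i ∈ Finset.range (H + 1 - h), L₁ * L₂ ^ i) * D p q) ∧
      (∀ x y, |V h x - V h y| ≤ (∑ i ∈ Finset.range (H + 1 - h), L₁ * L₂ ^ i) * dist x y) := by

  have hc_nonneg : ∀ n : ℕ, 0 ≤ ∑ i ∈ Finset.range n, L₁ * L₂ ^ i := fun n =>
    Finset.sum_nonneg fun i _ => mul_nonneg hL₁ (pow_nonneg hL₂ i)
  have hrec : ∀ n : ℕ, ∑ i ∈ Finset.range (n + 1), L₁ * L₂ ^ i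
      = L₁ + L₂ * ∑ i ∈ Finset.range n, L₁ * L₂ ^ i := by
    intro n
    rw [Finset.sum_range_succ', Finset.mul_sum]
    simp only [pow_succ, pow_zero, mul_one]
    rw [add_comm]
    congr 1
    apply Finset.sum_congr rfl
    intro i _
    ring
  have hVint : ∀ h ∈ Finset.Icc 1 H, ∀ p, Integrable (V (h + 1)) (P h p) := by
    intro h hmem p
    haveI := hP h hmem p
    refine Integrable.mono' (integrable_const (H : ℝ)) (hV_meas h hmem).aestronglyMeasurable ?_
    filter_upwards with x
    rw [Real.norm_eq_abs, abs_of_nonneg (hV_bdd h hmem x).1]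
    exact (hV_bdd h hmem x).2
  have hVint_le : ∀ h ∈ Finset.Icc 1 H, ∀ p, ∫ x, V (h + 1) x ∂(P h p) ≤ H := by
    intro h hmem p
    haveI := hP h hmem p
    calc ∫ x, V (h + 1) x ∂(P h p) ≤ ∫ _, (H : ℝ) ∂(P h p) :=
          integral_mono (hVint h hmem p) (integrable_const _) fun x => (hV_bdd h hmem x).2
      _ = H := by simp
  have hQle : ∀ h ∈ Finset.Icc 1 H, ∀ p, Q h p ≤ 1 + H := by
    intro h hmem p
    rw [hQ h hmem p]
    have := (hr_bdd h hmem p).2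
    have := hVint_le h hmem p
    linarith
  have key : ∀ n : ℕ, n ≤ H →
      (∀ p q, |Q (H + 1 - n) p - Q (H + 1 - n) q|
        ≤ (∑ i ∈ Finset.range n, L₁ * L₂ ^ i) * D p q) ∧
      (∀ x y, |V (H + 1 - n) x - V (H + 1 - n) y|
        ≤ (∑ i ∈ Finset.range n, L₁ * L₂ ^ i) * dist x y) := by
    intro n
    induction n with
    | zero =>
      intro _
      simp [hQ_top, hV_top]
    | succ n ih =>
      intro hn
      have e1 : H + 1 - (n + 1) = H - n := by omega
      have e2 : H + 1 - n = (H - n) + 1 := by omega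
      rw [e1]
      set h := H - n with hh
      have hmem : h ∈ Finset.Icc 1 H := Finset.mem_Icc.mpr ⟨by omega, by omega⟩
      have IH := ih (by omega)
      rw [e2] at IH
      have IHV := IH.2
      set c' := ∑ i ∈ Finset.range n, L₁ * L₂ ^ i with hc'
      have hc'0 : 0 ≤ c' := hc_nonneg n
      -- Lipschitz bound on the integral term
      have hIntLip : ∀ p q, |(∫ x, V (h + 1) x ∂(P h p)) - ∫ x, V (h + 1) x ∂(P h q)|
          ≤ c' * (L₂ * D p q) := by
        intro p q
        rcases eq_or_lt_of_le hc'0 with hc0 | hcpos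
        · have hconst : ∀ x, V (h + 1) x = V (h + 1) p.1 := by
            intro x
            have := IHV x p.1
            rw [← hc0, zero_mul] at this
            have h0 := abs_nonneg (V (h + 1) x - V (h + 1) p.1)
            have : |V (h + 1) x - V (h + 1) p.1| = 0 := le_antisymm this h0
            have := abs_eq_zero.mp this
            linarith
          have heq : ∀ m : S × A, ∫ x, V (h + 1) x ∂(P h m) = V (h + 1) p.1 := by
            intro m
            haveI := hP h hmem m
            have : (fun x => V (h + 1) x) = fun _ => V (h + 1) p.1 := funext hconst
            rw [this, integral_const]
            simp
          rw [heq p, heq q, sub_self, abs_zero, ← hc0, zero_mul]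
        · set f : S → ℝ := fun x => V (h + 1) x / c' with hf
          have hfb : ∃ M, ∀ x, |f x| ≤ M := by
            refine ⟨H / c', fun x => ?_⟩
            rw [hf]
            simp only
            rw [abs_div, abs_of_pos hcpos, abs_of_nonneg (hV_bdd h hmem x).1]
            gcongr
            exact (hV_bdd h hmem x).2
          have hfl : ∀ x y, |f x - f y| ≤ dist x y := by
            intro x y
            rw [hf]
            simp only
            rw [div_sub_div_same, abs_div, abs_of_pos hcpos, div_le_iff₀ hcpos]
            calc |V (h + 1) x - V (h + 1) y| ≤ c' * dist x y := IHV x y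
              _ = dist x y * c' := mul_comm _ _
          have hlip := hP_lip h hmem f hfb hfl p q
          have hdiv : ∀ m : S × A, ∫ x, f x ∂(P h m) = (∫ x, V (h + 1) x ∂(P h m)) / c' := by
            intro m
            rw [hf]
            exact integral_div c' _
          rw [hdiv p, hdiv q, div_sub_div_same, abs_div, abs_of_pos hcpos,
            div_le_iff₀ hcpos] at hlip
          calc |(∫ x, V (h + 1) x ∂(P h p)) - ∫ x, V (h + 1) x ∂(P h q)|
              ≤ L₂ * D p q * c' := hlip
            _ = c' * (L₂ * D p q) := by ring
      have hQlip : ∀ p q, |Q h p - Q h q|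
          ≤ (∑ i ∈ Finset.range (n + 1), L₁ * L₂ ^ i) * D p q := by
        intro p q
        rw [hrec n, hQ h hmem p, hQ h hmem q]
        have h1 := hr_lip h hmem p q
        have h2 := hIntLip p q
        have h3 : r h p + (∫ x, V (h + 1) x ∂(P h p))
            - (r h q + ∫ x, V (h + 1) x ∂(P h q))
            = (r h p - r h q) + ((∫ x, V (h + 1) x ∂(P h p)) - ∫ x, V (h + 1) x ∂(P h q)) := by
          ring
        rw [h3]
        have h4 := abs_add_le (r h p - r h q)
          ((∫ x, V (h + 1) x ∂(P h p)) - ∫ x, V (h + 1) x ∂(P h q))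
        have h5 : (L₁ + L₂ * c') * D p q = L₁ * D p q + c' * (L₂ * D p q) := by ring
        linarith
      have hcn : 0 ≤ ∑ i ∈ Finset.range (n + 1), L₁ * L₂ ^ i := hc_nonneg (n + 1)
      refine ⟨hQlip, ?_⟩
      have hbdd : ∀ x : S, BddAbove (Set.range fun a : A => Q h (x, a)) := by
        intro x
        refine ⟨1 + H, ?_⟩
        rintro _ ⟨a, rfl⟩
        exact hQle h hmem (x, a)
      have hle : ∀ x y : S, V h x ≤ V h y + (∑ i ∈ Finset.range (n + 1), L₁ * L₂ ^ i) * dist x y := by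
        intro x y
        rw [hV h hmem x, hV h hmem y]
        apply ciSup_le
        intro a
        have h1 : Q h (x, a) - Q h (y, a)
            ≤ (∑ i ∈ Finset.range (n + 1), L₁ * L₂ ^ i) * D (x, a) (y, a) :=
          le_trans (le_abs_self _) (hQlip (x, a) (y, a))
        have h2 : (∑ i ∈ Finset.range (n + 1), L₁ * L₂ ^ i) * D (x, a) (y, a)
            ≤ (∑ i ∈ Finset.range (n + 1), L₁ * L₂ ^ i) * dist x y :=
          mul_le_mul_of_nonneg_left (hD_compat x y a) hcn
        have h3 : Q h (y, a) ≤ ⨆ a : A, Q h (y, a) := le_ciSup (hbdd y) a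
        linarith
      intro x y
      rw [abs_sub_le_iff]
      constructor
      · have := hle x y
        linarith
      · have := hle y x
        rw [dist_comm] at this
        linarith
  intro h hh
  obtain ⟨h1, h2⟩ := Finset.mem_Icc.mp hh
  have e : H + 1 - (H + 1 - h) = h := by omega
  have hn : H + 1 - h ≤ H + 1 - 1 := by omega
  have := key (H + 1 - h) (by omega)
  rw [e] at this
  exact this
end

section
/- Let c > 0, d ≥ 0, and d_max > 0 be real numbers and let K ≥ 1 be a natural number. Set r_0 = d_max·K^{−1/(d+2)}. Then (K·r_0)/d_max + ∑_{i ∈ ℕ : d_max·2^{−i} ≥ r_0} c·(d_max·2^{−i})^{−d} · (d_max/(d_max·2^{−i})) ≤ (1 + 2·c·d_max^{−d}) · K^{(d+1)/(d+2)}. -/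
/-!
Write `M = K ^ (1 / (d + 2))`, so that `r₀ = dmax / M`. The scale `dmax * 2 ^ (-i)` is kept
exactly when `2 ^ i ≤ M`, and its term is `c * dmax ^ (-d) * (2 ^ i) ^ (d + 1)`. These terms form
a geometric series of ratio `2 ^ (d + 1) ≥ 2`, so their sum is at most twice the largest one,
which is at most `M ^ (d + 1) = K ^ ((d + 1) / (d + 2))`; the first summand `K * r₀ / dmax` is
`K ^ ((d + 1) / (d + 2))` as well.
-/

open Finset

lemma geom_sum_range_succ_le_two_mul_pow {q : ℝ} (hq : 2 ≤ q) (n : ℕ) :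
    ∑ i ∈ range (n + 1), q ^ i ≤ 2 * q ^ n := by
  induction n with
  | zero => simp
  | succ n ih =>
    rw [sum_range_succ, pow_succ]
    nlinarith [pow_nonneg (by linarith : (0 : ℝ) ≤ q) n]

lemma Nat.cast_pow_le_iff_le_log_floor {b : ℕ} (hb : 1 < b) {M : ℝ} (hM : 1 ≤ M) (i : ℕ) :
    (b : ℝ) ^ i ≤ M ↔ i ≤ Nat.log b ⌊M⌋₊ := by
  have hfloor : ⌊M⌋₊ ≠ 0 := Nat.one_le_iff_ne_zero.mp ((Nat.one_le_floor_iff M).mpr hM)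
  rw [Nat.le_log_iff_pow_le hb hfloor, Nat.le_floor_iff (by linarith)]
  push_cast
  rfl

lemma tsum_ite_two_pow_rpow_le {M s : ℝ} (hM : 1 ≤ M) (hs : 1 ≤ s) :
    ∑' i : ℕ, (if (2 : ℝ) ^ i ≤ M then ((2 : ℝ) ^ i) ^ s else 0) ≤ 2 * M ^ s := by
  set I := Nat.log 2 ⌊M⌋₊
  have hlog (i : ℕ) : (2 : ℝ) ^ i ≤ M ↔ i ≤ I := by
    exact_mod_cast Nat.cast_pow_le_iff_le_log_floor (by norm_num) hM i
  have hq : (2 : ℝ) ≤ 2 ^ s := by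
    simpa using Real.rpow_le_rpow_of_exponent_le (by norm_num : (1 : ℝ) ≤ 2) hs
  have hcomm (i : ℕ) : ((2 : ℝ) ^ i) ^ s = ((2 : ℝ) ^ s) ^ i :=
    (Real.rpow_pow_comm (by norm_num) s i).symm
  rw [tsum_eq_sum (s := range (I + 1)) fun i hi => by
    rw [if_neg (by rw [hlog]; simpa using hi)]]
  calc ∑ i ∈ range (I + 1), (if (2 : ℝ) ^ i ≤ M then ((2 : ℝ) ^ i) ^ s else 0)
      = ∑ i ∈ range (I + 1), ((2 : ℝ) ^ s) ^ i :=
        sum_congr rfl fun i hi => by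
          rw [if_pos ((hlog i).mpr (Nat.lt_succ_iff.mp (mem_range.mp hi))), hcomm]
    _ ≤ 2 * ((2 : ℝ) ^ s) ^ I := geom_sum_range_succ_le_two_mul_pow hq I
    _ ≤ 2 * M ^ s := by
        rw [← hcomm]
        gcongr
        exact (hlog I).mpr le_rfl

lemma mul_inv_rpow_neg_mul_div {a t : ℝ} (ha : 0 < a) (ht : 0 < t) (d : ℝ) :
    (a * t⁻¹) ^ (-d) * (a / (a * t⁻¹)) = a ^ (-d) * t ^ (d + 1) := by
  rw [Real.mul_rpow ha.le (inv_nonneg.mpr ht.le), Real.inv_rpow ht.le, Real.rpow_neg ht.le,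
    inv_inv, Real.rpow_add ht, Real.rpow_one]
  field_simp

theorem stmt_17 (c d dmax : ℝ) (hc : 0 < c) (hd : 0 ≤ d) (hdmax : 0 < dmax)
    (K : ℕ) (hK : 1 ≤ K)
    (r₀ : ℝ) (hr₀ : r₀ = dmax * (K : ℝ) ^ (-(1 / (d + 2)))) :
    (K : ℝ) * r₀ / dmax +
      (∑' i : ℕ, if r₀ ≤ dmax * (2 : ℝ) ^ (-(i : ℝ)) then
          c * (dmax * (2 : ℝ) ^ (-(i : ℝ))) ^ (-d) *
            (dmax / (dmax * (2 : ℝ) ^ (-(i : ℝ))))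
        else 0)
      ≤ (1 + 2 * c * dmax ^ (-d)) * (K : ℝ) ^ ((d + 1) / (d + 2)) := by
  have hK0 : (0 : ℝ) ≤ K := K.cast_nonneg
  set M := (K : ℝ) ^ (1 / (d + 2))
  have hM : 1 ≤ M := Real.one_le_rpow (by exact_mod_cast hK) (by positivity)
  have hMpow : M ^ (d + 1) = (K : ℝ) ^ ((d + 1) / (d + 2)) := by
    rw [← Real.rpow_mul hK0]
    ring_nf
  have hr₀M : r₀ = dmax * M⁻¹ := by rw [hr₀, Real.rpow_neg hK0]
  have hfirst : (K : ℝ) * r₀ / dmax = (K : ℝ) ^ ((d + 1) / (d + 2)) := by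
    have hKpos : (0 : ℝ) < K := by exact_mod_cast hK
    rw [hr₀, mul_div_assoc, mul_div_right_comm, div_self hdmax.ne', one_mul,
      show (d + 1) / (d + 2) = 1 + -(1 / (d + 2)) by field_simp; ring,
      Real.rpow_add hKpos, Real.rpow_one]
  have hterm (i : ℕ) : (if r₀ ≤ dmax * (2 : ℝ) ^ (-(i : ℝ)) then
        c * (dmax * (2 : ℝ) ^ (-(i : ℝ))) ^ (-d) * (dmax / (dmax * (2 : ℝ) ^ (-(i : ℝ))))
      else 0) = c * dmax ^ (-d) * (if (2 : ℝ) ^ i ≤ M then ((2 : ℝ) ^ i) ^ (d + 1) else 0) := by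
    have h2i : (2 : ℝ) ^ (-(i : ℝ)) = ((2 : ℝ) ^ i)⁻¹ := by
      rw [Real.rpow_neg (by norm_num), Real.rpow_natCast]
    have hcond : r₀ ≤ dmax * ((2 : ℝ) ^ i)⁻¹ ↔ (2 : ℝ) ^ i ≤ M := by
      rw [hr₀M, mul_le_mul_iff_right₀ hdmax, inv_le_inv₀ (by positivity) (by positivity)]
    simp only [h2i, hcond, mul_assoc,
      mul_inv_rpow_neg_mul_div hdmax (by positivity : (0 : ℝ) < 2 ^ i)]
    split_ifs <;> simp
  have hsum := tsum_ite_two_pow_rpow_le hM (by linarith : (1 : ℝ) ≤ d + 1)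
  rw [tsum_congr hterm, tsum_mul_left, hfirst, ← hMpow]
  linarith [mul_le_mul_of_nonneg_left hsum (by positivity : 0 ≤ c * dmax ^ (-d))]
end
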